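/- Let r ≥ 3 be an integer and G a nonempty finite simple r-regular graph. Then 3·c₃(G) + 4·c₄(G) ≤ (r−1)·C(r,2)·|V(G)|; equivalently, 3·d₃(G) + 4·d₄(G) ≤ r(r−1)²/2. In particular the point (d₃(G), d₄(G)) lies on or below the segment joining (0, r(r−1)²/8) and (r(r−1)/6, r(r−1)(r−2)/8). -/

import Mathlib

open SimpleGraph

/-- The number of `k`-cycle subgraphs of `G`: each `k`-cycle subgraph corresponds to exactly
`2 * k` rooted closed walks that are cycles of length `k`. -/
noncomputable def cycleCount {V : Type*} (G : SimpleGraph V) (k : ℕ) : ℕ :=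
  Nat.card ((x : V) × {p : G.Walk x x // p.IsCycle ∧ p.length = k}) / (2 * k)

/-- The density of `k`-cycles: the number of `k`-cycles divided by the number of vertices. -/
noncomputable def cycleDensity {V : Type*} (G : SimpleGraph V) (k : ℕ) : ℝ :=
  (cycleCount G k : ℝ) / (Nat.card V : ℝ)

/-- A graph is `r`-regular if every vertex has exactly `r` neighbors. -/
def IsRegularGraph {V : Type*} (G : SimpleGraph V) (r : ℕ) : Prop :=
  ∀ v : V, Nat.card (G.neighborSet v) = r

/-!
Reading off the first three steps of a rooted directed `3`- or `4`-cycle gives a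
non-backtracking walk `a - b - c - d`, and this walk determines the cycle: for a triangle
`d = a`, for a square `d ≠ a` and the square is closed by the edge `d - a`. Hence
`6 c₃ + 8 c₄` is at most the number of non-backtracking walks of length three, and choosing
the middle dart `b → c` and then `a` and `d` shows there are at most `n r (r - 1)²` of them
when all degrees are at most `r`.
-/

open Finset

lemma Nat.card_le_finsetCard_of_injective {α β : Type*} {s : Finset β} {f : α → β}
    (hf : Function.Injective f) (hs : ∀ a, f a ∈ s) : Nat.card α ≤ #s :=
  (Nat.card_le_card_of_injective (fun a => (⟨f a, hs a⟩ : s))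
    fun _ _ h => hf (congrArg Subtype.val h)).trans_eq (Nat.card_eq_finsetCard s)

namespace SimpleGraph

variable {V : Type*} {G : SimpleGraph V}

/-- `cycleCount G k` is `Nat.card (G.RootedCycle k) / (2 * k)`. -/
abbrev RootedCycle (G : SimpleGraph V) (k : ℕ) : Type _ :=
  (x : V) × {p : G.Walk x x // p.IsCycle ∧ p.length = k}

namespace Walk

def initialVerts {u v : V} (p : G.Walk u v) : V × V × V × V :=
  (p.getVert 0, p.getVert 1, p.getVert 2, p.getVert 3)

lemma ext_initialVerts {u v : V} {p q : G.Walk u v} (hl : p.length = q.length)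
    (h4 : p.length ≤ 4) (h : p.initialVerts = q.initialVerts) : p = q := by
  simp only [initialVerts, Prod.mk.injEq] at h
  obtain ⟨h0, h1, h2, h3⟩ := h
  refine ext_getVert_le_length hl fun k hk => ?_
  rcases Nat.lt_or_ge k 4 with hk4 | hk4
  · interval_cases k <;> assumption
  · rw [getVert_of_length_le p (by omega), getVert_of_length_le q (by omega)]

end Walk

lemma RootedCycle.initialVerts_injective {k : ℕ} (hk : k ≤ 4) :
    Function.Injective fun c : G.RootedCycle k => c.2.1.initialVerts := by
  rintro ⟨x, p, -, hp⟩ ⟨y, q, -, hq⟩ (h : p.initialVerts = q.initialVerts)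
  obtain rfl : x = y := by simpa [Walk.initialVerts] using congrArg Prod.fst h
  obtain rfl : p = q := Walk.ext_initialVerts (hp.trans hq.symm) (hp ▸ hk) h
  rfl

variable [Fintype V] [DecidableEq V] [DecidableRel G.Adj]

variable (G) in
def nonbacktrackingThreeWalks : Finset (V × V × V × V) :=
  univ.filter fun (a, b, c, d) => G.Adj a b ∧ G.Adj b c ∧ G.Adj c d ∧ a ≠ c ∧ b ≠ d

lemma Walk.IsCycle.initialVerts_mem_nonbacktrackingThreeWalks {x : V} {p : G.Walk x x}
    (hp : p.IsCycle) : p.initialVerts ∈ G.nonbacktrackingThreeWalks := by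
  have hl := hp.three_le_length
  simp only [nonbacktrackingThreeWalks, Walk.initialVerts, mem_filter, mem_univ, true_and]
  exact ⟨p.adj_getVert_succ (by omega), p.adj_getVert_succ (by omega),
    p.adj_getVert_succ (by omega), hp.getVert_sub_one_ne_getVert_add_one (i := 1) (by omega),
    hp.getVert_sub_one_ne_getVert_add_one (i := 2) (by omega)⟩

lemma card_rootedCycle_three_add_four_le :
    Nat.card (G.RootedCycle 3) + Nat.card (G.RootedCycle 4) ≤ #G.nonbacktrackingThreeWalks := by
  set S := G.nonbacktrackingThreeWalks
  have hmem {k : ℕ} (c : G.RootedCycle k) : c.2.1.initialVerts ∈ S :=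
    c.2.2.1.initialVerts_mem_nonbacktrackingThreeWalks
  have h3 : Nat.card (G.RootedCycle 3) ≤ #{t ∈ S | t.1 = t.2.2.2} := by
    refine Nat.card_le_finsetCard_of_injective (RootedCycle.initialVerts_injective (by norm_num))
      fun ⟨x, p, hp, hl⟩ => mem_filter.2 ⟨hmem _, ?_⟩
    simp [Walk.initialVerts, ← hl]
  have h4 : Nat.card (G.RootedCycle 4) ≤ #{t ∈ S | ¬t.1 = t.2.2.2} := by
    refine Nat.card_le_finsetCard_of_injective (RootedCycle.initialVerts_injective le_rfl)
      fun ⟨x, p, hp, hl⟩ => mem_filter.2 ⟨hmem _, ?_⟩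
    simp only [Walk.initialVerts, Walk.getVert_zero, ne_comm (a := x)]
    rw [Ne, hp.getVert_endpoint_iff (by omega)]
    omega
  exact (add_le_add h3 h4).trans_eq (card_filter_add_card_filter_not _)

lemma card_nonbacktrackingThreeWalks_le {r : ℕ} (hr : ∀ v, G.degree v ≤ r) :
    #G.nonbacktrackingThreeWalks ≤ Fintype.card V * r * (r - 1) ^ 2 := by
  set N := G.neighborFinset
  have hN {b c : V} (hc : c ∈ N b) : #((N b).erase c) ≤ r - 1 := by
    rw [card_erase_of_mem hc, card_neighborFinset_eq_degree]
    exact Nat.sub_le_sub_right (hr b) 1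
  calc #G.nonbacktrackingThreeWalks
      ≤ #(univ.biUnion fun b => (N b).biUnion fun c =>
          ((N b).erase c ×ˢ (N c).erase b).image fun (a, d) => (a, b, c, d)) := by
        refine card_le_card fun ⟨a, b, c, d⟩ ht => ?_
        simp only [nonbacktrackingThreeWalks, mem_filter, mem_univ, true_and] at ht
        obtain ⟨hab, hbc, hcd, hac, hbd⟩ := ht
        simp only [mem_biUnion, mem_univ, true_and, mem_image, mem_product, mem_erase, N,
          mem_neighborFinset, Prod.exists, Prod.mk.injEq]
        exact ⟨b, c, hbc, a, d, ⟨⟨hac, hab.symm⟩, hbd.symm, hcd⟩, rfl, rfl, rfl, rfl⟩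
    _ ≤ ∑ b, ∑ c ∈ N b, #((N b).erase c) * #((N c).erase b) :=
        card_biUnion_le.trans <| sum_le_sum fun b _ => card_biUnion_le.trans <|
          sum_le_sum fun c _ => card_image_le.trans (card_product _ _).le
    _ ≤ ∑ b, ∑ c ∈ N b, (r - 1) * (r - 1) :=
        sum_le_sum fun b _ => sum_le_sum fun c hc => Nat.mul_le_mul (hN hc)
          (hN ((G.mem_neighborFinset c b).2 ((G.mem_neighborFinset b c).1 hc).symm))
    _ ≤ ∑ _b : V, r * ((r - 1) * (r - 1)) := by
        refine sum_le_sum fun b _ => ?_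
        rw [sum_const, smul_eq_mul, card_neighborFinset_eq_degree]
        exact Nat.mul_le_mul_right _ (hr b)
    _ = Fintype.card V * r * (r - 1) ^ 2 := by
        rw [sum_const, card_univ, smul_eq_mul]
        ring

end SimpleGraph

theorem three_c3_add_four_c4_le_general {V : Type*} [Finite V]
    (r : ℕ) (G : SimpleGraph V) (hG : IsRegularGraph G r) :
    3 * cycleCount G 3 + 4 * cycleCount G 4 ≤ (r - 1) * r.choose 2 * Nat.card V ∧
    3 * cycleDensity G 3 + 4 * cycleDensity G 4 ≤ (r : ℝ) * ((r : ℝ) - 1) ^ 2 / 2 := by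
  classical
  have := Fintype.ofFinite V
  have hdeg (v : V) : G.degree v ≤ r := by
    rw [← card_neighborSet_eq_degree, ← Nat.card_eq_fintype_card, hG v]
  have hchoose : 2 * r.choose 2 = r * (r - 1) := by
    rw [Nat.choose_two_right, Nat.mul_div_cancel' (Nat.even_mul_pred_self r).two_dvd]
  have hcount : 3 * cycleCount G 3 + 4 * cycleCount G 4 ≤ (r - 1) * r.choose 2 * Nat.card V := by
    have h3 : cycleCount G 3 * 6 ≤ Nat.card (G.RootedCycle 3) := Nat.div_mul_le_self _ _
    have h4 : cycleCount G 4 * 8 ≤ Nat.card (G.RootedCycle 4) := Nat.div_mul_le_self _ _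
    have hwalks := card_rootedCycle_three_add_four_le.trans (card_nonbacktrackingThreeWalks_le hdeg)
    have hn : Fintype.card V * r * (r - 1) ^ 2 = 2 * ((r - 1) * r.choose 2 * Nat.card V) := by
      rw [Nat.card_eq_fintype_card, show 2 * ((r - 1) * r.choose 2 * Fintype.card V) =
        (r - 1) * (2 * r.choose 2) * Fintype.card V by ring, hchoose]
      ring
    omega
  refine ⟨hcount, ?_⟩
  have hreal : (((r - 1) * r.choose 2 : ℕ) : ℝ) = r * ((r : ℝ) - 1) ^ 2 / 2 := by
    rcases r with _ | r
    · simp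
    · push_cast [Nat.cast_choose_two]
      ring
  rw [cycleDensity, cycleDensity, ← mul_div_assoc, ← mul_div_assoc, ← add_div, ← hreal]
  exact div_le_of_le_mul₀ (Nat.cast_nonneg _) (Nat.cast_nonneg _) (by exact_mod_cast hcount)

/-- For a nonempty finite simple `r`-regular graph `G` (`r ≥ 3`):
`3·c₃(G) + 4·c₄(G) ≤ (r-1)·C(r,2)·|V(G)|`, equivalently
`3·d₃(G) + 4·d₄(G) ≤ r(r-1)²/2`, i.e. the point `(d₃(G), d₄(G))` lies on or below the
segment joining `(0, r(r-1)²/8)` and `(r(r-1)/6, r(r-1)(r-2)/8)`. -/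
theorem three_c3_add_four_c4_le {V : Type*} [Finite V] [Nonempty V]
    (r : ℕ) (hr : 3 ≤ r) (G : SimpleGraph V) (hG : IsRegularGraph G r) :
    3 * cycleCount G 3 + 4 * cycleCount G 4 ≤ (r - 1) * r.choose 2 * Nat.card V ∧
    3 * cycleDensity G 3 + 4 * cycleDensity G 4 ≤ (r : ℝ) * ((r : ℝ) - 1) ^ 2 / 2 :=
  three_c3_add_four_c4_le_general r G hG
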